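/- Stabilizer of the triple conic: for (A,B) ∈ SL(2,ℂ) × SL(2,ℂ), there exists λ ∈ ℂˣ with σ_{A,B}((x₀y₁ − x₁y₀)³) = λ·(x₀y₁ − x₁y₀)³ if and only if B = A or B = −A. Hence the stabilizer of the triple conic 3C, up to scalar, in SL(2,ℂ) × SL(2,ℂ) is exactly the subgroup H = {(A, εA) : A ∈ SL(2,ℂ), ε ∈ {1,−1}}. -/
import Mathlib


open Matrix

abbrev SL2 := Matrix.SpecialLinearGroup (Fin 2) ℂ

instance : Fact (Even (Fintype.card (Fin 2))) := ⟨by simp⟩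

open MvPolynomial

/-- The ℂ-algebra endomorphism `σ_{A,B}` of `ℂ[x₀,x₁,y₀,y₁]`
(variables `X 0 = x₀`, `X 1 = x₁`, `X 2 = y₀`, `X 3 = y₁`) determined by
`x₀ ↦ A₀₀x₀ + A₀₁x₁`, `x₁ ↦ A₁₀x₀ + A₁₁x₁`, `y₀ ↦ B₀₀y₀ + B₀₁y₁`,
`y₁ ↦ B₁₀y₀ + B₁₁y₁`. -/
noncomputable def sigmaAB (A B : SL2) :
    MvPolynomial (Fin 4) ℂ →ₐ[ℂ] MvPolynomial (Fin 4) ℂ :=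
  aeval ![C ((A : Matrix (Fin 2) (Fin 2) ℂ) 0 0) * X 0
            + C ((A : Matrix (Fin 2) (Fin 2) ℂ) 0 1) * X 1,
          C ((A : Matrix (Fin 2) (Fin 2) ℂ) 1 0) * X 0
            + C ((A : Matrix (Fin 2) (Fin 2) ℂ) 1 1) * X 1,
          C ((B : Matrix (Fin 2) (Fin 2) ℂ) 0 0) * X 2
            + C ((B : Matrix (Fin 2) (Fin 2) ℂ) 0 1) * X 3,
          C ((B : Matrix (Fin 2) (Fin 2) ℂ) 1 0) * X 2
            + C ((B : Matrix (Fin 2) (Fin 2) ℂ) 1 1) * X 3]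

lemma aux_scalar (a00 a01 a10 a11 b00 b01 b10 b11 : ℂ)
    (hdA : a00 * a11 - a01 * a10 = 1) (hdB : b00 * b11 - b01 * b10 = 1)
    (e1 : a00 * b10 - a10 * b00 = 0) (e2 : a01 * b11 - a11 * b01 = 0)
    (e4 : (a00 + a01) * (b10 + b11) - (a10 + a11) * (b00 + b01) = 0) :
    (b00 = a00 ∧ b01 = a01 ∧ b10 = a10 ∧ b11 = a11) ∨
    (b00 = -a00 ∧ b01 = -a01 ∧ b10 = -a10 ∧ b11 = -a11) := by
  obtain ⟨q, hq⟩ : ∃ q : ℂ, q = a00 * b11 - a10 * b01 := ⟨_, rfl⟩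
  have hr : a01 * b10 - a11 * b00 = -q := by linear_combination e4 - e1 - e2 + hq
  have hb00 : b00 = q * a00 := by linear_combination (-b00) * hdA + a01 * e1 - a00 * hr
  have hb01 : b01 = q * a01 := by linear_combination (-b01) * hdA - a00 * e2 - a01 * hq
  have hb10 : b10 = q * a10 := by linear_combination (-b10) * hdA + a11 * e1 - a10 * hr
  have hb11 : b11 = q * a11 := by linear_combination (-b11) * hdA - a10 * e2 - a11 * hq
  rw [hb00, hb01, hb10, hb11] at hdB
  have hq2 : (q - 1) * (q + 1) = 0 := by linear_combination hdB - q ^ 2 * hdA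
  rcases mul_eq_zero.mp hq2 with h | h
  · left
    have hq1 : q = 1 := by linear_combination h
    rw [hq1, one_mul] at hb00 hb01 hb10 hb11
    exact ⟨hb00, hb01, hb10, hb11⟩
  · right
    have hq1 : q = -1 := by linear_combination h
    rw [hq1, neg_one_mul] at hb00 hb01 hb10 hb11
    exact ⟨hb00, hb01, hb10, hb11⟩

/-- **Stabilizer of the triple conic.** For `(A,B) ∈ SL(2,ℂ) × SL(2,ℂ)`, there exists
`λ ∈ ℂˣ` with `σ_{A,B}((x₀y₁ − x₁y₀)³) = λ·(x₀y₁ − x₁y₀)³` if and only if `B = A` or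
`B = −A`; i.e. the stabilizer of the triple conic `3C`, up to scalar, is exactly the
subgroup `H = {(A, εA) : ε ∈ {1,−1}}`. -/
theorem tripleConic_stabilizer (A B : SL2) :
    (∃ lam : ℂˣ, sigmaAB A B ((X 0 * X 3 - X 1 * X 2) ^ 3)
        = C (lam : ℂ) * (X 0 * X 3 - X 1 * X 2) ^ 3)
      ↔ (B = A ∨ B = -A) := by
  have hdA : (A : Matrix (Fin 2) (Fin 2) ℂ) 0 0 * (A : Matrix (Fin 2) (Fin 2) ℂ) 1 1
      - (A : Matrix (Fin 2) (Fin 2) ℂ) 0 1 * (A : Matrix (Fin 2) (Fin 2) ℂ) 1 0 = 1 := by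
    have := A.2; rwa [Matrix.det_fin_two] at this
  have hdB : (B : Matrix (Fin 2) (Fin 2) ℂ) 0 0 * (B : Matrix (Fin 2) (Fin 2) ℂ) 1 1
      - (B : Matrix (Fin 2) (Fin 2) ℂ) 0 1 * (B : Matrix (Fin 2) (Fin 2) ℂ) 1 0 = 1 := by
    have := B.2; rwa [Matrix.det_fin_two] at this
  constructor
  · rintro ⟨lam, h⟩
    have e1 := congrArg (eval ![(1:ℂ),0,1,0]) h
    have e2 := congrArg (eval ![(0:ℂ),1,0,1]) h
    have e4 := congrArg (eval ![(1:ℂ),1,1,1]) h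
    simp [sigmaAB] at e1 e2 e4
    rcases aux_scalar _ _ _ _ _ _ _ _ hdA hdB e1 e2 e4 with
      ⟨h1, h2, h3, h4⟩ | ⟨h1, h2, h3, h4⟩
    · left
      ext i j
      fin_cases i <;> fin_cases j <;> assumption
    · right
      ext i j
      have hc : ((-A : SL2) : Matrix (Fin 2) (Fin 2) ℂ) = -(A : Matrix (Fin 2) (Fin 2) ℂ) := rfl
      fin_cases i <;> fin_cases j <;>
        simp only [hc, Matrix.neg_apply] <;> assumption
  · intro hBA
    have key : ∀ ε : ℂ, (B : Matrix (Fin 2) (Fin 2) ℂ) = ε • (A : Matrix (Fin 2) (Fin 2) ℂ) →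
        sigmaAB A B (X 0 * X 3 - X 1 * X 2) = C ε * (X 0 * X 3 - X 1 * X 2) := by
      intro ε hε
      have h00 : (B : Matrix (Fin 2) (Fin 2) ℂ) 0 0 = ε * (A : Matrix (Fin 2) (Fin 2) ℂ) 0 0 := by
        rw [hε]; simp [Matrix.smul_apply]
      have h01 : (B : Matrix (Fin 2) (Fin 2) ℂ) 0 1 = ε * (A : Matrix (Fin 2) (Fin 2) ℂ) 0 1 := by
        rw [hε]; simp [Matrix.smul_apply]
      have h10 : (B : Matrix (Fin 2) (Fin 2) ℂ) 1 0 = ε * (A : Matrix (Fin 2) (Fin 2) ℂ) 1 0 := by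
        rw [hε]; simp [Matrix.smul_apply]
      have h11 : (B : Matrix (Fin 2) (Fin 2) ℂ) 1 1 = ε * (A : Matrix (Fin 2) (Fin 2) ℂ) 1 1 := by
        rw [hε]; simp [Matrix.smul_apply]
      have hC : (C ((A : Matrix (Fin 2) (Fin 2) ℂ) 0 0 * (A : Matrix (Fin 2) (Fin 2) ℂ) 1 1
          - (A : Matrix (Fin 2) (Fin 2) ℂ) 0 1 * (A : Matrix (Fin 2) (Fin 2) ℂ) 1 0)
          : MvPolynomial (Fin 4) ℂ) = 1 := by rw [hdA, _root_.map_one]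
      rw [map_sub, _root_.map_mul, _root_.map_mul] at hC
      simp only [sigmaAB, map_sub, _root_.map_mul, aeval_X, Matrix.cons_val_zero,
        Matrix.cons_val_one, Matrix.head_cons, Matrix.cons_val_two, Matrix.tail_cons,
        Matrix.cons_val_three, h00, h01, h10, h11, _root_.map_mul]
      linear_combination (C ε * (X 0 * X 3 - X 1 * X 2) : MvPolynomial (Fin 4) ℂ) * hC
    rcases hBA with hBA | hBA
    · refine ⟨1, ?_⟩
      have := key 1 (by rw [hBA, one_smul])
      rw [map_pow, this]
      simp only [Units.val_one, _root_.map_one]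
      ring
    · refine ⟨-1, ?_⟩
      have := key (-1) (by
        rw [hBA]
        have : ((-A : SL2) : Matrix (Fin 2) (Fin 2) ℂ) = -(A : Matrix (Fin 2) (Fin 2) ℂ) := rfl
        rw [this, neg_smul, one_smul])
      rw [map_pow, this]
      simp only [Units.val_neg, Units.val_one, map_neg, _root_.map_one]
      ring
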